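/- arXiv:2112.10589 — 4 statements merged into one kernel-verified Lean document; each statement's English description precedes it below -/
import Mathlib

section
/- Fix α > 0 and N ∈ ℕ, and let x, p : [0,∞) → ℝ^N be differentiable and solve the peakon ODE system. Assume p_j(t) ≥ 0 for all j and t, and Σ_{j=1}^N p_j(t) = 1 for all t ≥ 0. Define m(t) = Σ_{j=1}^N p_j(t) δ_{x_j(t)}, where δ_z is the Dirac measure at z. Then for all s, t ≥ 0, ‖m(s) − m(t)‖_BL ≤ (1/(2α) + 1/(2α²)) |s−t|. -/
/-!
Fix a test function `f` with `‖f‖_∞ + Lip(f) ≤ 1`. Since `∫ f dm(τ) = ∑ⱼ pⱼ(τ) f(xⱼ(τ))`,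
the difference `∫ f dm(s) - ∫ f dm(t)` splits into `∑ⱼ f(xⱼ(s)) (pⱼ(s) - pⱼ(t))` and
`∑ⱼ pⱼ(t) (f(xⱼ(s)) - f(xⱼ(t)))`. For probability weights the peakon velocities are bounded by
`1/(2α)` and the momentum rates by `pⱼ/(2α²)`, so the mean value inequality bounds the first
part by `‖f‖_∞ |s - t|/(2α²)` and the second by `Lip(f) |s - t|/(2α)`.
-/

open MeasureTheory Filter ZeroAtInfty

/-- The peakon ODE system for the Camassa–Holm equation (with `sgn 0 = 0`),
posed on the time interval `[0,∞)`. -/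
def PeakonSystem (α : ℝ) (N : ℕ) (x p : ℝ → Fin N → ℝ) : Prop :=
  ∀ j : Fin N, ∀ t : ℝ, 0 ≤ t →
    HasDerivWithinAt (fun τ => x τ j)
      ((1 / (2 * α)) * ∑ i, p t i * Real.exp (-|x t j - x t i| / α)) (Set.Ici 0) t ∧
    HasDerivWithinAt (fun τ => p τ j)
      ((1 / (2 * α ^ 2)) * p t j * ∑ i ∈ Finset.univ.erase j,
        p t i * Real.sign (x t j - x t i) * Real.exp (-|x t j - x t i| / α)) (Set.Ici 0) t

/-- The peakon measure `m(t) = ∑ⱼ pⱼ(t) δ_{xⱼ(t)}`. -/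
noncomputable def peakonMeasure (N : ℕ) (x p : ℝ → Fin N → ℝ) (t : ℝ) : Measure ℝ :=
  ∑ j, ENNReal.ofReal (p t j) • Measure.dirac (x t j)

/-- A test function for the bounded Lipschitz (Dudley) norm: `f ∈ C₀(ℝ)` with
`‖f‖_∞ + Lip(f) ≤ 1`. -/
def BLtest (f : C₀(ℝ, ℝ)) : Prop := ∃ K : NNReal, LipschitzWith K f ∧ ‖f‖ + (K : ℝ) ≤ 1

/-- The bounded Lipschitz (Dudley) distance `‖μ − ν‖_BL` between two finite
(positive) measures. -/
noncomputable def blDist (μ ν : Measure ℝ) : ℝ :=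
  sSup {r | ∃ f : C₀(ℝ, ℝ), BLtest f ∧ r = (∫ x, f x ∂μ) - ∫ x, f x ∂ν}

open Finset Set

lemma Real.abs_sign_le_one (r : ℝ) : |Real.sign r| ≤ 1 := by
  rcases Real.sign_apply_eq r with h | h | h <;> simp [h]

lemma Finset.abs_sum_mul_le_sum_of_abs_le_one {ι : Type*} (s : Finset ι) {w c : ι → ℝ}
    (hw : ∀ i ∈ s, 0 ≤ w i) (hc : ∀ i ∈ s, |c i| ≤ 1) :
    |∑ i ∈ s, w i * c i| ≤ ∑ i ∈ s, w i :=
  (abs_sum_le_sum_abs _ _).trans <| sum_le_sum fun i hi => by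
    rw [abs_mul, abs_of_nonneg (hw i hi)]
    exact mul_le_of_le_one_right (hw i hi) (hc i hi)

lemma abs_sub_le_of_hasDerivWithinAt_Ici {g g' : ℝ → ℝ} {C : ℝ}
    (hg : ∀ τ ∈ Ici (0 : ℝ), HasDerivWithinAt g (g' τ) (Ici 0) τ)
    (hC : ∀ τ ∈ Ici (0 : ℝ), |g' τ| ≤ C) {s t : ℝ} (hs : 0 ≤ s) (ht : 0 ≤ t) :
    |g s - g t| ≤ C * |s - t| := by
  simpa only [Real.norm_eq_abs] using
    (convex_Ici 0).norm_image_sub_le_of_norm_hasDerivWithin_le hg hC ht hs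

lemma abs_exp_neg_abs_div_le_one {α : ℝ} (hα : 0 < α) (a : ℝ) :
    |Real.exp (-|a| / α)| ≤ 1 := by
  rw [abs_of_pos (Real.exp_pos _), Real.exp_le_one_iff]
  exact div_nonpos_of_nonpos_of_nonneg (neg_nonpos.mpr (abs_nonneg a)) hα.le

lemma integral_peakonMeasure {N : ℕ} {x p : ℝ → Fin N → ℝ} {t : ℝ} (hp : ∀ j, 0 ≤ p t j)
    (f : ℝ → ℝ) :
    ∫ y, f y ∂peakonMeasure N x p t = ∑ j, p t j * f (x t j) := by
  rw [peakonMeasure, integral_finsetSum_measure fun j _ =>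
    (integrable_dirac enorm_lt_top).smul_measure ENNReal.ofReal_ne_top]
  refine sum_congr rfl fun j _ => ?_
  rw [integral_smul_measure, integral_dirac, ENNReal.toReal_ofReal (hp j), smul_eq_mul]

section

variable {α : ℝ} {N : ℕ} {x p : ℝ → Fin N → ℝ}

noncomputable def peakonVelocity (α : ℝ) (N : ℕ) (x p : ℝ → Fin N → ℝ) (t : ℝ) (j : Fin N) :
    ℝ :=
  (1 / (2 * α)) * ∑ i, p t i * Real.exp (-|x t j - x t i| / α)

noncomputable def peakonMomentumRate (α : ℝ) (N : ℕ) (x p : ℝ → Fin N → ℝ) (t : ℝ)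
    (j : Fin N) : ℝ :=
  (1 / (2 * α ^ 2)) * p t j * ∑ i ∈ univ.erase j,
    p t i * Real.sign (x t j - x t i) * Real.exp (-|x t j - x t i| / α)

lemma abs_peakonVelocity_le (hα : 0 < α) {t : ℝ} (hp : ∀ i, 0 ≤ p t i)
    (hmom : ∑ i, p t i = 1) (j : Fin N) :
    |peakonVelocity α N x p t j| ≤ 1 / (2 * α) := by
  have hsum := abs_sum_mul_le_sum_of_abs_le_one univ (fun i _ => hp i)
    (fun i _ => abs_exp_neg_abs_div_le_one hα (x t j - x t i))
  rw [peakonVelocity, abs_mul, abs_of_pos (by positivity : 0 < 1 / (2 * α))]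
  rw [hmom] at hsum
  exact mul_le_of_le_one_right (by positivity) hsum

lemma abs_peakonMomentumRate_le (hα : 0 < α) {t : ℝ} (hp : ∀ i, 0 ≤ p t i)
    (hmom : ∑ i, p t i = 1) (j : Fin N) :
    |peakonMomentumRate α N x p t j| ≤ 1 / (2 * α ^ 2) * p t j := by
  have hsum : |∑ i ∈ univ.erase j,
      p t i * (Real.sign (x t j - x t i) * Real.exp (-|x t j - x t i| / α))| ≤ 1 := by
    refine (abs_sum_mul_le_sum_of_abs_le_one _ (fun i _ => hp i) fun i _ => ?_).trans ?_
    · rw [abs_mul]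
      exact mul_le_one₀ (Real.abs_sign_le_one _) (abs_nonneg _)
        (abs_exp_neg_abs_div_le_one hα _)
    · exact hmom ▸ sum_le_sum_of_subset_of_nonneg (erase_subset j univ) fun i _ _ => hp i
  simp only [peakonMomentumRate, mul_assoc] at hsum ⊢
  rw [← mul_assoc, abs_mul, abs_of_nonneg (by have := hp j; positivity)]
  exact mul_le_of_le_one_right (by have := hp j; positivity) hsum

namespace PeakonSystem

lemma abs_sub_position_le (hode : PeakonSystem α N x p) (hα : 0 < α)
    (hpos : ∀ j t, 0 ≤ t → 0 ≤ p t j) (hmom : ∀ t, 0 ≤ t → ∑ j, p t j = 1) (j : Fin N)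
    {s t : ℝ} (hs : 0 ≤ s) (ht : 0 ≤ t) :
    |x s j - x t j| ≤ 1 / (2 * α) * |s - t| :=
  abs_sub_le_of_hasDerivWithinAt_Ici (g' := fun τ => peakonVelocity α N x p τ j)
    (fun τ hτ => (hode j τ hτ).1)
    (fun τ hτ => abs_peakonVelocity_le hα (fun i => hpos i τ hτ) (hmom τ hτ) j) hs ht

lemma abs_sum_mul_momentum_sub_le (hode : PeakonSystem α N x p) (hα : 0 < α)
    (hpos : ∀ j t, 0 ≤ t → 0 ≤ p t j) (hmom : ∀ t, 0 ≤ t → ∑ j, p t j = 1)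
    {c : Fin N → ℝ} {B : ℝ} (hc : ∀ j, |c j| ≤ B) {s t : ℝ} (hs : 0 ≤ s) (ht : 0 ≤ t) :
    |∑ j, c j * p s j - ∑ j, c j * p t j| ≤ B / (2 * α ^ 2) * |s - t| := by
  refine abs_sub_le_of_hasDerivWithinAt_Ici
    (g' := fun τ => ∑ j, c j * peakonMomentumRate α N x p τ j)
    (fun τ hτ => HasDerivWithinAt.fun_sum fun j _ => (hode j τ hτ).2.const_mul (c j))
    (fun τ hτ => ?_) hs ht
  calc |∑ j, c j * peakonMomentumRate α N x p τ j|
      ≤ ∑ j, |c j| * |peakonMomentumRate α N x p τ j| := by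
        simpa only [abs_mul] using
          abs_sum_le_sum_abs (fun j => c j * peakonMomentumRate α N x p τ j) univ
    _ ≤ ∑ j, B * (1 / (2 * α ^ 2) * p τ j) := by
        gcongr with j
        · exact (abs_nonneg _).trans (hc j)
        · exact hc j
        · exact abs_peakonMomentumRate_le hα (fun i => hpos i τ hτ) (hmom τ hτ) j
    _ = B / (2 * α ^ 2) := by
        rw [← mul_sum, ← mul_sum, hmom τ hτ]
        ring

lemma integral_sub_integral_le (hode : PeakonSystem α N x p) (hα : 0 < α)
    (hpos : ∀ j t, 0 ≤ t → 0 ≤ p t j) (hmom : ∀ t, 0 ≤ t → ∑ j, p t j = 1)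
    {f : C₀(ℝ, ℝ)} {K : NNReal} (hf : LipschitzWith K f) {s t : ℝ} (hs : 0 ≤ s) (ht : 0 ≤ t) :
    ∫ y, f y ∂peakonMeasure N x p s - ∫ y, f y ∂peakonMeasure N x p t ≤
      (‖f‖ / (2 * α ^ 2) + K / (2 * α)) * |s - t| := by
  have hmomentum := abs_sum_mul_momentum_sub_le hode hα hpos hmom (c := fun j => f (x s j))
    (B := ‖f‖) (fun j => (f.toBCF.norm_coe_le_norm (x s j)).trans_eq
      ZeroAtInftyContinuousMap.norm_toBCF_eq_norm) hs ht
  have hposition : ∑ j, p t j * (f (x s j) - f (x t j)) ≤ K / (2 * α) * |s - t| :=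
    calc ∑ j, p t j * (f (x s j) - f (x t j))
        ≤ ∑ j, p t j * (K * (1 / (2 * α) * |s - t|)) := by
          gcongr with j
          · exact hpos j t ht
          · exact (le_abs_self _).trans <|
              hf.dist_le_mul_of_le (abs_sub_position_le hode hα hpos hmom j hs ht)
      _ = K / (2 * α) * |s - t| := by
          rw [← sum_mul, hmom t ht]
          ring
  rw [integral_peakonMeasure (hpos · s hs), integral_peakonMeasure (hpos · t ht)]
  calc ∑ j, p s j * f (x s j) - ∑ j, p t j * f (x t j)
      = (∑ j, f (x s j) * p s j - ∑ j, f (x s j) * p t j) +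
          ∑ j, p t j * (f (x s j) - f (x t j)) := by
        simp only [mul_sub, sum_sub_distrib, mul_comm (f _)]
        ring
    _ ≤ (‖f‖ / (2 * α ^ 2) + K / (2 * α)) * |s - t| := by
        linarith [(le_abs_self _).trans hmomentum]

end PeakonSystem

end

/-- for nonnegative peakon solutions of total momentum `1`, the map
`t ↦ m(t) = ∑ⱼ pⱼ(t) δ_{xⱼ(t)}` is Lipschitz for the bounded Lipschitz metric with
constant `1/(2α) + 1/(2α²)`. -/
theorem statement3 (α : ℝ) (hα : 0 < α) (N : ℕ) (x p : ℝ → Fin N → ℝ)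
    (hode : PeakonSystem α N x p)
    (hpos : ∀ j : Fin N, ∀ t : ℝ, 0 ≤ t → 0 ≤ p t j)
    (hmom : ∀ t : ℝ, 0 ≤ t → ∑ j, p t j = 1) :
    ∀ s t : ℝ, 0 ≤ s → 0 ≤ t →
      blDist (peakonMeasure N x p s) (peakonMeasure N x p t) ≤
        (1 / (2 * α) + 1 / (2 * α ^ 2)) * |s - t| := by
  intro s t hs ht
  refine Real.sSup_le ?_ (by positivity)
  rintro r ⟨f, ⟨K, hf, hfK⟩, rfl⟩
  have hf1 : ‖f‖ ≤ 1 := by linarith [K.coe_nonneg]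
  have hK1 : (K : ℝ) ≤ 1 := by linarith [norm_nonneg f]
  calc _ ≤ (‖f‖ / (2 * α ^ 2) + K / (2 * α)) * |s - t| :=
        hode.integral_sub_integral_le hα hpos hmom hf hs ht
    _ ≤ (1 / (2 * α ^ 2) + 1 / (2 * α)) * |s - t| := by gcongr
    _ = (1 / (2 * α) + 1 / (2 * α ^ 2)) * |s - t| := by ring
end

section
/- Let F be a left-continuous integrable BV function, say F(x) = ν((−∞,x)) for a finite signed measure ν with F ∈ L¹(ℝ). Then for every finite signed measure μ on ℝ, ∫_ℝ |(F*μ)(x)| dx ≤ (‖F‖_{L¹} + ‖ν‖) · ‖μ‖_BL, where (F*μ)(x) = ∫_ℝ F(x−y) dμ(y). -/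
/-!
Test `h = F * μ` against its sign on a compact set `K`: by Fubini, `∫_K |h| = ∫ g dμ`
with `g y = ∫_K sgn(h x) F(x - y) dx`. This `g` vanishes at infinity, is bounded by
`‖F‖_{L¹}`, and is `‖ν‖`-Lipschitz, since `|F(x - a) - F(x - b)| ≤ |ν|([x - b, x - a))`
and Tonelli give `∫ |F(x - a) - F(x - b)| dx ≤ |b - a| ‖ν‖`.
So `∫ g dμ ≤ (‖F‖_{L¹} + ‖ν‖) ‖μ‖_BL`, and exhausting `ℝ` by compact sets gives the claim.
-/

open MeasureTheory Filter ZeroAtInfty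

/-- Integral of a real function against a finite signed measure,
via the Jordan decomposition. -/
noncomputable def sint (μ : MeasureTheory.SignedMeasure ℝ) (f : ℝ → ℝ) : ℝ :=
  ∫ x, f x ∂μ.toJordanDecomposition.posPart - ∫ x, f x ∂μ.toJordanDecomposition.negPart

/-- The total variation norm `‖μ‖` of a finite signed measure. -/
noncomputable def tvNorm (μ : MeasureTheory.SignedMeasure ℝ) : ℝ :=
  (μ.totalVariation Set.univ).toReal

/-- The bounded Lipschitz (Dudley) norm `‖μ‖_BL` of a finite signed measure. -/
noncomputable def blNorm (μ : MeasureTheory.SignedMeasure ℝ) : ℝ :=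
  sSup {r | ∃ f : C₀(ℝ, ℝ), BLtest f ∧ r = sint μ f}

open Set Topology

namespace MeasureTheory.SignedMeasure

variable {α : Type*} [MeasurableSpace α]

lemma apply_eq_toReal_posPart_sub_toReal_negPart (ν : SignedMeasure α) {s : Set α}
    (hs : MeasurableSet s) :
    ν s = (ν.toJordanDecomposition.posPart s).toReal
      - (ν.toJordanDecomposition.negPart s).toReal := by
  conv_lhs => rw [← ν.toSignedMeasure_toJordanDecomposition]
  rw [JordanDecomposition.toSignedMeasure, Measure.toSignedMeasure_sub_apply hs]
  rfl

lemma abs_apply_le_toReal_totalVariation (ν : SignedMeasure α) {s : Set α}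
    (hs : MeasurableSet s) : |ν s| ≤ (ν.totalVariation s).toReal := by
  rw [ν.apply_eq_toReal_posPart_sub_toReal_negPart hs, totalVariation, Measure.add_apply,
    ENNReal.toReal_add (measure_ne_top _ _) (measure_ne_top _ _)]
  exact (abs_sub _ _).trans_eq (by simp only [abs_of_nonneg ENNReal.toReal_nonneg])

lemma abs_apply_Iio_sub_apply_Iio_le (ν : SignedMeasure ℝ) {a b : ℝ} (hab : a ≤ b) :
    |ν (Iio b) - ν (Iio a)| ≤ (ν.totalVariation (Ico a b)).toReal := by
  rw [← Iio_union_Ico_eq_Iio hab, VectorMeasure.of_union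
    ((Iio_disjoint_Ici le_rfl).mono_right Ico_subset_Ici_self) measurableSet_Iio
    measurableSet_Ico, add_sub_cancel_left]
  exact ν.abs_apply_le_toReal_totalVariation measurableSet_Ico

lemma lintegral_abs_apply_Iio_sub_le (ν : SignedMeasure ℝ) (a b : ℝ) :
    ∫⁻ x, ENNReal.ofReal |ν (Iio (x - a)) - ν (Iio (x - b))|
      ≤ ENNReal.ofReal |b - a| * ν.totalVariation univ := by
  wlog hab : a ≤ b generalizing a b
  · simpa only [abs_sub_comm] using this b a (le_of_not_ge hab)
  rw [abs_of_nonneg (sub_nonneg.2 hab)]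
  set τ := ν.totalVariation
  have : IsFiniteMeasure τ := by unfold τ totalVariation; infer_instance
  set S : Set (ℝ × ℝ) := {p | p.1 - b ≤ p.2} ∩ {p | p.2 < p.1 - a}
  have hS : MeasurableSet S := (measurableSet_le (measurable_fst.sub_const b) measurable_snd).inter
    (measurableSet_lt measurable_snd (measurable_fst.sub_const a))
  calc ∫⁻ x, ENNReal.ofReal |ν (Iio (x - a)) - ν (Iio (x - b))|
      ≤ ∫⁻ x, τ (Prod.mk x ⁻¹' S) := lintegral_mono fun x => by
        rw [← ENNReal.ofReal_toReal (measure_ne_top τ _)]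
        exact ENNReal.ofReal_le_ofReal (ν.abs_apply_Iio_sub_apply_Iio_le (by linarith))
    _ = ∫⁻ t, volume ((·, t) ⁻¹' S) ∂τ := by
      rw [← Measure.prod_apply hS, Measure.prod_apply_symm hS]
    _ = ∫⁻ _, ENNReal.ofReal (b - a) ∂τ := lintegral_congr fun t => by
      have : (·, t) ⁻¹' S = Ioc (t + a) (t + b) := by
        ext x
        simp only [S, mem_preimage, mem_inter_iff, mem_ofPred_eq, mem_Ioc]
        constructor <;> rintro ⟨h₁, h₂⟩ <;> constructor <;> linarith
      rw [this, Real.volume_Ioc, add_sub_add_left_eq_sub]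
    _ = ENNReal.ofReal (b - a) * τ univ := lintegral_const _

end MeasureTheory.SignedMeasure

section BoundedLipschitz

variable (μ : SignedMeasure ℝ)

lemma sint_const_mul (c : ℝ) (f : ℝ → ℝ) : sint μ (fun x => c * f x) = c * sint μ f := by
  simp only [sint, integral_const_mul, mul_sub]

lemma sint_le_tvNorm_of_abs_le_one {f : ℝ → ℝ} (hf : ∀ x, |f x| ≤ 1) :
    sint μ f ≤ tvNorm μ := by
  have hbound : ∀ m : Measure ℝ, [IsFiniteMeasure m] → |∫ x, f x ∂m| ≤ m.real univ :=
    fun m _ => by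
    simpa using norm_integral_le_of_norm_le_const (μ := m) (f := f) (C := 1) (ae_of_all _ hf)
  have hP := hbound μ.toJordanDecomposition.posPart
  have hN := hbound μ.toJordanDecomposition.negPart
  rw [tvNorm, SignedMeasure.totalVariation, Measure.add_apply,
    ENNReal.toReal_add (measure_ne_top _ _) (measure_ne_top _ _)]
  simp only [sint, measureReal_def] at hP hN ⊢
  linarith [le_abs_self (∫ x, f x ∂μ.toJordanDecomposition.posPart),
    neg_abs_le (∫ x, f x ∂μ.toJordanDecomposition.negPart)]

lemma bddAbove_sint_BLtest : BddAbove {r | ∃ f : C₀(ℝ, ℝ), BLtest f ∧ r = sint μ f} := by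
  refine ⟨tvNorm μ, ?_⟩
  rintro r ⟨f, ⟨K, -, hfK⟩, rfl⟩
  refine sint_le_tvNorm_of_abs_le_one μ fun x => ?_
  calc |f x| = ‖f.toBCF x‖ := rfl
    _ ≤ ‖f‖ := f.toBCF.norm_coe_le_norm x
    _ ≤ 1 := by linarith [K.coe_nonneg]

lemma blNorm_nonneg : 0 ≤ blNorm μ :=
  le_csSup (bddAbove_sint_BLtest μ)
    ⟨0, ⟨0, LipschitzWith.const 0, by simp⟩, by simp [sint]⟩

lemma sint_le_mul_blNorm (f : C₀(ℝ, ℝ)) {K : NNReal} (hK : LipschitzWith K f) :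
    sint μ f ≤ (‖f‖ + K) * blNorm μ := by
  rcases (add_nonneg (norm_nonneg f) K.coe_nonneg).eq_or_lt with h | h
  · have hf : f = 0 := norm_eq_zero.mp (by linarith [norm_nonneg f, K.coe_nonneg])
    simpa [hf, sint] using mul_nonneg K.coe_nonneg (blNorm_nonneg μ)
  set c := (‖f‖ + K)⁻¹
  have hc : 0 < c := inv_pos.2 h
  have htest : BLtest (c • f) := by
    refine ⟨‖c‖₊ * K, (lipschitzWith_smul c).comp hK, ?_⟩
    rw [norm_smul, NNReal.coe_mul, coe_nnnorm, Real.norm_of_nonneg hc.le, ← mul_add,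
      inv_mul_cancel₀ h.ne']
  have hle : c * sint μ f ≤ blNorm μ := by
    rw [← sint_const_mul]
    exact le_csSup (bddAbove_sint_BLtest μ) ⟨c • f, htest, rfl⟩
  calc sint μ f = (‖f‖ + K) * (c * sint μ f) := by
        rw [← mul_assoc, mul_inv_cancel₀ h.ne', one_mul]
    _ ≤ (‖f‖ + K) * blNorm μ := mul_le_mul_of_nonneg_left hle h.le

end BoundedLipschitz

section Convolution

variable {F s : ℝ → ℝ}

lemma integrable_comp_sub_prod (hF : Integrable F) (W : Measure ℝ) [IsFiniteMeasure W] :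
    Integrable (fun p : ℝ × ℝ => F (p.1 - p.2)) (volume.prod W) := by
  simpa using
    (integrable_const (1 : ℝ)).convolution_integrand (ContinuousLinearMap.mul ℝ ℝ) hF

lemma integrable_integral_comp_sub (hF : Integrable F) (W : Measure ℝ) [IsFiniteMeasure W] :
    Integrable (fun x => ∫ y, F (x - y) ∂W) :=
  (integrable_comp_sub_prod hF W).integral_prod_left

lemma integral_mul_integral_comp_sub (hF : Integrable F) (hs : AEStronglyMeasurable s)
    {C : ℝ} (hsC : ∀ x, ‖s x‖ ≤ C) (W : Measure ℝ) [IsFiniteMeasure W] :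
    ∫ x, s x * ∫ y, F (x - y) ∂W = ∫ y, (∫ x, s x * F (x - y)) ∂W := by
  simp_rw [← integral_const_mul]
  exact integral_integral_swap (f := fun x y => s x * F (x - y)) <|
    (integrable_comp_sub_prod hF W).bdd_mul
      (hs.comp_quasiMeasurePreserving Measure.quasiMeasurePreserving_fst)
      (ae_of_all _ fun p => hsC p.1)

variable (μ : SignedMeasure ℝ)

lemma integrable_sint_comp_sub (hF : Integrable F) :
    Integrable (fun x => sint μ fun y => F (x - y)) :=
  (integrable_integral_comp_sub hF _).sub (integrable_integral_comp_sub hF _)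

lemma integral_mul_sint_comp_sub (hF : Integrable F) (hs : AEStronglyMeasurable s)
    {C : ℝ} (hsC : ∀ x, ‖s x‖ ≤ C) :
    ∫ x, s x * sint μ (fun y => F (x - y)) = sint μ fun y => ∫ x, s x * F (x - y) := by
  have hint : ∀ (W : Measure ℝ) [IsFiniteMeasure W],
      Integrable fun x => s x * ∫ y, F (x - y) ∂W :=
    fun W _ => (integrable_integral_comp_sub hF W).bdd_mul hs (ae_of_all _ hsC)
  simp only [sint, mul_sub]
  rw [integral_sub (hint _) (hint _), integral_mul_integral_comp_sub hF hs hsC,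
    integral_mul_integral_comp_sub hF hs hsC]

end Convolution

section TestFunction

variable {ν : SignedMeasure ℝ} {F s : ℝ → ℝ}

lemma abs_integral_mul_comp_sub_le (hF : Integrable F) (hs1 : ∀ x, |s x| ≤ 1) (y : ℝ) :
    |∫ x, s x * F (x - y)| ≤ ∫ x, |F x| := by
  rw [← integral_sub_right_eq_self (μ := volume) (fun x => |F x|) y]
  refine (Real.norm_eq_abs _).ge.trans <|
    norm_integral_le_of_norm_le (hF.abs.comp_sub_right y) (ae_of_all _ fun x => ?_)
  rw [norm_mul]
  exact mul_le_of_le_one_left (abs_nonneg _) (hs1 x)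

lemma lipschitzWith_integral_mul_comp_sub (hF : ∀ x, F x = ν (Iio x)) (hFint : Integrable F)
    (hs : AEStronglyMeasurable s) (hs1 : ∀ x, |s x| ≤ 1) :
    LipschitzWith (tvNorm ν).toNNReal fun y => ∫ x, s x * F (x - y) := by
  refine LipschitzWith.of_dist_le_mul fun y y' => ?_
  have hint : ∀ y, Integrable fun x => s x * F (x - y) :=
    fun y => (hFint.comp_sub_right y).bdd_mul hs (ae_of_all _ hs1)
  rw [Real.dist_eq, Real.dist_eq, ← integral_sub (hint y) (hint y'),
    Real.coe_toNNReal (tvNorm ν) ENNReal.toReal_nonneg]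
  simp_rw [← mul_sub]
  calc |∫ x, s x * (F (x - y) - F (x - y'))|
      ≤ (∫⁻ x, ENNReal.ofReal ‖s x * (F (x - y) - F (x - y'))‖).toReal :=
        (Real.norm_eq_abs _).ge.trans (norm_integral_le_lintegral_norm _)
    _ ≤ (∫⁻ x, ENNReal.ofReal |ν (Iio (x - y)) - ν (Iio (x - y'))|).toReal := by
        refine ENNReal.toReal_mono ?_ (lintegral_mono fun x => ENNReal.ofReal_le_ofReal ?_)
        · exact ne_top_of_le_ne_top (by finiteness) (ν.lintegral_abs_apply_Iio_sub_le y y')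
        · rw [norm_mul, ← hF, ← hF]
          exact mul_le_of_le_one_left (abs_nonneg _) (hs1 x)
    _ ≤ (ENNReal.ofReal |y' - y| * ν.totalVariation univ).toReal :=
        ENNReal.toReal_mono (by finiteness) (ν.lintegral_abs_apply_Iio_sub_le y y')
    _ = tvNorm ν * |y - y'| := by
        rw [ENNReal.toReal_mul, ENNReal.toReal_ofReal (abs_nonneg _), abs_sub_comm, mul_comm,
          tvNorm]

lemma tendsto_integral_mul_comp_sub_cocompact (hF : Integrable F) (hs : AEStronglyMeasurable s)
    (hs1 : ∀ x, |s x| ≤ 1) (hsc : HasCompactSupport s) :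
    Tendsto (fun y => ∫ x, s x * F (x - y)) (cocompact ℝ) (𝓝 0) := by
  have hshift : ∀ y, ∫ x, s x * F (x - y) = ∫ u, s (u + y) * F u := fun y => by
    rw [← integral_sub_right_eq_self (fun u => s (u + y) * F u) y]
    simp only [sub_add_cancel]
  simp_rw [hshift]
  have : (cocompact ℝ).IsCountablyGenerated := by rw [cocompact_eq_atBot_atTop]; infer_instance
  simpa using tendsto_integral_filter_of_dominated_convergence (F := fun y u => s (u + y) * F u)
    (fun u => |F u|)
    (Eventually.of_forall fun y =>
      (hs.comp_measurePreserving (measurePreserving_add_right volume y)).mul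
        hF.aestronglyMeasurable)
    (Eventually.of_forall fun y => ae_of_all _ fun u => by
      rw [norm_mul]; exact mul_le_of_le_one_left (abs_nonneg _) (hs1 _))
    hF.abs
    (ae_of_all _ fun u => (hsc.is_zero_at_infty.comp
      (Homeomorph.addLeft u).isClosedEmbedding.tendsto_cocompact).mul_const (F u))

lemma sint_integral_mul_comp_sub_le (μ : SignedMeasure ℝ) (hF : ∀ x, F x = ν (Iio x))
    (hFint : Integrable F) (hs : AEStronglyMeasurable s) (hs1 : ∀ x, |s x| ≤ 1)
    (hsc : HasCompactSupport s) :
    sint μ (fun y => ∫ x, s x * F (x - y)) ≤ ((∫ x, |F x|) + tvNorm ν) * blNorm μ := by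
  have hlip := lipschitzWith_integral_mul_comp_sub hF hFint hs hs1
  let G : C₀(ℝ, ℝ) :=
    ⟨⟨_, hlip.continuous⟩, tendsto_integral_mul_comp_sub_cocompact hFint hs hs1 hsc⟩
  have hG : ‖G‖ ≤ ∫ x, |F x| := by
    rw [← ZeroAtInftyContinuousMap.norm_toBCF_eq_norm]
    exact (BoundedContinuousFunction.norm_le (integral_nonneg fun _ => abs_nonneg _)).2
      (abs_integral_mul_comp_sub_le hFint hs1)
  calc sint μ (fun y => ∫ x, s x * F (x - y)) = sint μ G := rfl
    _ ≤ (‖G‖ + (tvNorm ν).toNNReal) * blNorm μ := sint_le_mul_blNorm μ G hlip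
    _ ≤ ((∫ x, |F x|) + tvNorm ν) * blNorm μ := by
      rw [Real.coe_toNNReal (tvNorm ν) ENNReal.toReal_nonneg]
      gcongr
      exact blNorm_nonneg μ

end TestFunction

lemma setIntegral_abs_sint_comp_sub_le (μ ν : SignedMeasure ℝ) {F : ℝ → ℝ}
    (hF : ∀ x, F x = ν (Iio x)) (hFint : Integrable F) {K : Set ℝ} (hK : IsCompact K) :
    ∫ x in K, |sint μ fun y => F (x - y)| ≤ ((∫ x, |F x|) + tvNorm ν) * blNorm μ := by
  set h := fun x => sint μ fun y => F (x - y)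
  set σ : ℝ → ℝ := fun t => if 0 ≤ t then 1 else -1
  set s := K.indicator (σ ∘ h)
  have hσm : Measurable σ := Measurable.ite measurableSet_Ici measurable_const measurable_const
  have hs : AEStronglyMeasurable s :=
    (hσm.comp_aemeasurable (integrable_sint_comp_sub μ hFint).aemeasurable
      ).aestronglyMeasurable.indicator hK.measurableSet
  have hσ1 : ∀ t, |σ t| ≤ 1 := fun t => by simp only [σ]; split_ifs <;> norm_num
  have hσ_mul : ∀ t, σ t * t = |t| := fun t => by
    simp only [σ]
    split_ifs with ht
    · rw [one_mul, abs_of_nonneg ht]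
    · rw [neg_one_mul, abs_of_neg (not_le.1 ht)]
  have hs1 : ∀ x, |s x| ≤ 1 := fun x => by
    by_cases hx : x ∈ K <;> simp [s, hx, hσ1]
  have hsc : HasCompactSupport s := HasCompactSupport.intro hK fun x hx => indicator_of_notMem hx _
  calc ∫ x in K, |h x| = ∫ x, s x * h x := by
        rw [← integral_indicator hK.measurableSet]
        congr 1 with x
        by_cases hx : x ∈ K <;> simp [s, hx, hσ_mul]
    _ = sint μ fun y => ∫ x, s x * F (x - y) := integral_mul_sint_comp_sub μ hFint hs hs1
    _ ≤ ((∫ x, |F x|) + tvNorm ν) * blNorm μ :=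
      sint_integral_mul_comp_sub_le μ hF hFint hs hs1 hsc

/-- Young-type inequality for the bounded Lipschitz norm.  For a
left-continuous integrable BV function `F(x) = ν((−∞,x))` and any finite signed
measure `μ`, `∫ |(F*μ)(x)| dx ≤ (‖F‖_{L¹} + ‖ν‖) ‖μ‖_BL`. -/
theorem statement6 (ν : MeasureTheory.SignedMeasure ℝ) (F : ℝ → ℝ)
    (hF : ∀ x : ℝ, F x = ν (Set.Iio x)) (hFint : Integrable F volume)
    (μ : MeasureTheory.SignedMeasure ℝ) :
    ∫⁻ x : ℝ, ENNReal.ofReal |sint μ (fun y => F (x - y))| ≤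
      ENNReal.ofReal (((∫ x : ℝ, |F x|) + tvNorm ν) * blNorm μ) := by
  rw [← setLIntegral_univ, ← iUnion_compactCovering ℝ,
    setLIntegral_iUnion_of_directed _
      (Monotone.directed_le (f := compactCovering ℝ) (compactCovering_subset ℝ))]
  refine iSup_le fun n => ?_
  rw [← ofReal_integral_eq_lintegral_ofReal (integrable_sint_comp_sub μ hFint).abs.integrableOn
    (ae_of_all _ fun _ => abs_nonneg _)]
  exact ENNReal.ofReal_le_ofReal
    (setIntegral_abs_sint_comp_sub_le μ ν hF hFint (isCompact_compactCovering ℝ n))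
end

section
/- Let α > 0 and let ν be a finite signed Borel measure on ℝ such that ∫_ℝ e^{−|x−y|/α} dν(y) = 0 for every x ∈ ℝ. Then ν = 0. -/
/-!
Convolving a finite measure `μ` with an integrable kernel `g` multiplies its characteristic
function by the Fourier transform `ĝ`. For `g u = exp (-|u| / α)` one computes
`ĝ t = 2α / (1 + α² t²)`, which never vanishes, so equal convolutions of the positive and
negative parts of `ν` force equal characteristic functions, hence equal measures.
-/

open MeasureTheory Filter ZeroAtInfty

open Complex Set

theorem integral_convolution_mul_exp_eq_mul_charFun {μ : Measure ℝ} [IsFiniteMeasure μ]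
    {g : ℝ → ℂ} (hg : Integrable g) (t : ℝ) :
    ∫ x, (∫ y, g (x - y) ∂μ) * exp (t * x * I) =
      (∫ u, g u * exp (t * u * I)) * charFun μ t := by
  have hexp : Integrable (fun y : ℝ => exp (t * y * I)) μ := by
    refine (integrable_const (1 : ℝ)).mono' (by fun_prop) (ae_of_all _ fun y => ?_)
    rw [← ofReal_mul, norm_exp_ofReal_mul_I]
  have hgt : Integrable (fun u => g u * exp (t * u * I)) :=
    hg.mul_bdd (by fun_prop) (ae_of_all _ fun u => by rw [← ofReal_mul, norm_exp_ofReal_mul_I])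
  -- Splitting `exp (t x I) = exp (t y I) * exp (t (x - y) I)` exhibits a convolution integrand.
  have hint := hexp.convolution_integrand (ContinuousLinearMap.mul ℂ ℂ) hgt (μ := volume)
  simp only [ContinuousLinearMap.mul_apply'] at hint
  calc ∫ x, (∫ y, g (x - y) ∂μ) * exp (t * x * I)
      = ∫ x, ∫ y, exp (t * y * I) * (g (x - y) * exp (t * ↑(x - y) * I)) ∂μ := by
        refine integral_congr_ae (ae_of_all _ fun x => ?_)
        simp only [← integral_mul_const]
        refine integral_congr_ae (ae_of_all _ fun y => ?_)
        dsimp only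
        rw [mul_left_comm, ← exp_add]
        congr 2
        push_cast
        ring
    _ = ∫ y, ∫ x, exp (t * y * I) * (g (x - y) * exp (t * ↑(x - y) * I)) ∂volume ∂μ :=
        integral_integral_swap hint
    _ = (∫ u, g u * exp (t * u * I)) * charFun μ t := by
        rw [charFun_apply_real, ← integral_const_mul]
        refine integral_congr_ae (ae_of_all _ fun y => ?_)
        dsimp only
        rw [integral_const_mul, integral_sub_right_eq_self (fun u => g u * exp (t * u * I)),
          mul_comm]

theorem MeasureTheory.Measure.ext_of_integral_comp_sub_eq {μ ν : Measure ℝ} [IsFiniteMeasure μ]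
    [IsFiniteMeasure ν] {g : ℝ → ℂ} (hg : Integrable g)
    (hĝ : ∀ t : ℝ, ∫ u, g u * exp (t * u * I) ≠ 0)
    (h : ∀ x, ∫ y, g (x - y) ∂μ = ∫ y, g (x - y) ∂ν) : μ = ν := by
  refine Measure.ext_of_charFun (funext fun t => mul_left_cancel₀ (hĝ t) ?_)
  simp only [← integral_convolution_mul_exp_eq_mul_charFun hg, h]

theorem integrable_exp_neg_abs_div {α : ℝ} (hα : 0 < α) :
    Integrable (fun u : ℝ => Real.exp (-|u| / α)) := by
  have hleft : IntegrableOn (fun u : ℝ => Real.exp (-|u| / α)) (Iic 0) :=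
    (integrableOn_exp_mul_Iic (inv_pos.2 hα) 0).congr_fun (fun u (hu : u ≤ 0) => by
      rw [abs_of_nonpos hu]; ring_nf) measurableSet_Iic
  have hright : IntegrableOn (fun u : ℝ => Real.exp (-|u| / α)) (Ioi 0) :=
    (integrableOn_exp_mul_Ioi (neg_lt_zero.2 (inv_pos.2 hα)) 0).congr_fun
      (fun u (hu : 0 < u) => by rw [abs_of_pos hu]; ring_nf) measurableSet_Ioi
  rw [← integrableOn_univ, ← Iic_union_Ioi (a := 0)]
  exact hleft.union hright

theorem integral_exp_neg_abs_div_mul_exp {α : ℝ} (hα : 0 < α) (t : ℝ) :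
    ∫ u : ℝ, (Real.exp (-|u| / α) : ℂ) * exp (t * u * I) =
      2 * α / (1 + α ^ 2 * t ^ 2) := by
  set a : ℂ := α⁻¹ + t * I
  set b : ℂ := -α⁻¹ + t * I
  have ha : 0 < a.re := by simpa [a] using hα
  have hb : b.re < 0 := by simpa [b] using hα
  have hleft : EqOn (fun u : ℝ => (Real.exp (-|u| / α) : ℂ) * exp (t * u * I))
      (fun u : ℝ => exp (a * u)) (Iic 0) := fun u (hu : u ≤ 0) => by
    dsimp only
    rw [abs_of_nonpos hu, ofReal_exp, ← exp_add]; congr 1; push_cast [a]; ring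
  have hright : EqOn (fun u : ℝ => (Real.exp (-|u| / α) : ℂ) * exp (t * u * I))
      (fun u : ℝ => exp (b * u)) (Ioi 0) := fun u (hu : 0 < u) => by
    dsimp only
    rw [abs_of_pos hu, ofReal_exp, ← exp_add]; congr 1; push_cast [b]; ring
  rw [← intervalIntegral.integral_Iic_add_Ioi
      ((integrableOn_exp_mul_complex_Iic ha 0).congr_fun hleft.symm measurableSet_Iic)
      ((integrableOn_exp_mul_complex_Ioi hb 0).congr_fun hright.symm measurableSet_Ioi),
    setIntegral_congr_fun measurableSet_Iic hleft,
    setIntegral_congr_fun measurableSet_Ioi hright,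
    integral_exp_mul_complex_Iic ha, integral_exp_mul_complex_Ioi hb]
  have ha0 : a ≠ 0 := fun h => by simp [h] at ha
  have hb0 : b ≠ 0 := fun h => by simp [h] at hb
  have hden : (1 + α ^ 2 * t ^ 2 : ℂ) ≠ 0 := by
    exact_mod_cast (by positivity : (0 : ℝ) < 1 + α ^ 2 * t ^ 2).ne'
  have hα0 : (α : ℂ) ≠ 0 := by exact_mod_cast hα.ne'
  simp only [ofReal_zero, mul_zero, exp_zero]
  rw [div_add_div _ _ ha0 hb0, div_eq_div_iff (mul_ne_zero ha0 hb0) hden]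
  simp only [a, b]
  push_cast
  field_simp
  linear_combination (-2 * α ^ 2 * t ^ 2) * I_sq

/-- injectivity of convolution with the Helmholtz Green's function: if
`∫ e^{−|x−y|/α} dν(y) = 0` for every `x`, then `ν = 0`. -/
theorem statement16 (α : ℝ) (hα : 0 < α) (ν : MeasureTheory.SignedMeasure ℝ)
    (h : ∀ x : ℝ, sint ν (fun y => Real.exp (-|x - y| / α)) = 0) :
    ν = 0 := by
  have hconv : ∀ x : ℝ,
      ∫ y, (Real.exp (-|x - y| / α) : ℂ) ∂ν.toJordanDecomposition.posPart =
        ∫ y, (Real.exp (-|x - y| / α) : ℂ) ∂ν.toJordanDecomposition.negPart := fun x => by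
    rw [integral_complex_ofReal, integral_complex_ofReal, ← sub_eq_zero, ← ofReal_sub]
    exact_mod_cast h x
  have hpn : ν.toJordanDecomposition.posPart = ν.toJordanDecomposition.negPart := by
    refine Measure.ext_of_integral_comp_sub_eq (integrable_exp_neg_abs_div hα).ofReal
      (fun t => ?_) hconv
    refine (integral_exp_neg_abs_div_mul_exp hα t).trans_ne ?_
    exact_mod_cast (by positivity : (0 : ℝ) < 2 * α / (1 + α ^ 2 * t ^ 2)).ne'
  rw [← ν.toSignedMeasure_toJordanDecomposition]
  simp only [JordanDecomposition.toSignedMeasure, hpn, sub_self]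
end

section
/- Fix α > 0 and N ∈ ℕ, and let x, p : [0,∞) → ℝ^N be differentiable and solve the peakon ODE system, with p_j(t) ≥ 0 for all j, t and Σ_{j=1}^N p_j(t) = 1 for all t ≥ 0. Then for all s, t ≥ 0: |x_j(s) − x_j(t)| ≤ (1/(2α)) |s−t| for every j, and Σ_{j=1}^N |p_j(s) − p_j(t)| ≤ (1/(2α²)) |s−t|. -/
open MeasureTheory Filter ZeroAtInfty

/-!
Both bounds are mean-value estimates. All interaction weights `e^{-|x_j - x_i|/α}` and
`sgn(x_j - x_i) e^{-|x_j - x_i|/α}` lie in `[-1, 1]`, so for nonnegative momenta of total mass `1`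
the speed of every peakon is at most `1/(2α)` and `|p_j'| ≤ p_j/(2α²)`, whence `Σ_j |p_j'| ≤ 1/(2α²)`.
For the momenta the mean-value theorem is applied in `ℓ¹`: with the frozen signs
`ε_j = sgn(p_j(s) - p_j(t))`, the scalar function `Σ_j ε_j p_j` has derivative bounded by `Σ_j |p_j'|`
and increment `Σ_j |p_j(s) - p_j(t)|` between `t` and `s`.
-/

namespace Real

lemma abs_sign_le_one_s18 (r : ℝ) : |Real.sign r| ≤ 1 := by
  rcases Real.sign_apply_eq r with h | h | h <;> norm_num [h]

lemma sign_mul_self_eq_abs (r : ℝ) : Real.sign r * r = |r| := by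
  rcases lt_trichotomy r 0 with h | rfl | h
  · rw [sign_of_neg h, abs_of_neg h, neg_one_mul]
  · simp
  · rw [sign_of_pos h, abs_of_pos h, one_mul]

lemma exp_neg_abs_div_le_one {α : ℝ} (hα : 0 ≤ α) (r : ℝ) : Real.exp (-|r| / α) ≤ 1 :=
  Real.exp_le_one_iff.mpr (div_nonpos_of_nonpos_of_nonneg (neg_nonpos.mpr (abs_nonneg r)) hα)

end Real

lemma Finset.abs_sum_mul_le_sum_abs {ι : Type*} (s : Finset ι) {w q : ι → ℝ}
    (hw : ∀ i ∈ s, |w i| ≤ 1) : |∑ i ∈ s, w i * q i| ≤ ∑ i ∈ s, |q i| :=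
  calc |∑ i ∈ s, w i * q i| ≤ ∑ i ∈ s, |w i * q i| := Finset.abs_sum_le_sum_abs _ _
    _ ≤ ∑ i ∈ s, |q i| := Finset.sum_le_sum fun i hi => by
        rw [abs_mul]; exact mul_le_of_le_one_left (abs_nonneg _) (hw i hi)

theorem Convex.sum_abs_sub_le_of_hasDerivWithinAt {ι : Type*} [Fintype ι] {s : Set ℝ}
    (hs : Convex ℝ s) {f f' : ℝ → ι → ℝ} {C : ℝ}
    (hf : ∀ j, ∀ t ∈ s, HasDerivWithinAt (fun τ => f τ j) (f' t j) s t)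
    (hC : ∀ t ∈ s, ∑ j, |f' t j| ≤ C) {a b : ℝ} (ha : a ∈ s) (hb : b ∈ s) :
    ∑ j, |f a j - f b j| ≤ C * |a - b| := by
  set ε : ι → ℝ := fun j => Real.sign (f a j - f b j)
  have hε : ∀ j ∈ Finset.univ, |ε j| ≤ 1 := fun j _ => Real.abs_sign_le_one_s18 _
  have hmvt := hs.norm_image_sub_le_of_norm_hasDerivWithin_le
    (f := fun τ => ∑ j, ε j * f τ j) (f' := fun t => ∑ j, ε j * f' t j)
    (fun t ht => HasDerivWithinAt.fun_sum fun j _ => (hf j t ht).const_mul (ε j))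
    (fun t ht => (Finset.abs_sum_mul_le_sum_abs _ hε).trans (hC t ht)) hb ha
  have hincr : ∑ j, |f a j - f b j| = ∑ j, ε j * f a j - ∑ j, ε j * f b j := by
    simp only [← Finset.sum_sub_distrib, ← mul_sub, ε, Real.sign_mul_self_eq_abs]
  rw [hincr]
  exact (le_abs_self _).trans hmvt

section Peakon

variable {α : ℝ} {N : ℕ} {x p : ℝ → Fin N → ℝ} {t : ℝ}

lemma peakon_velocity_abs_le (hα : 0 < α) (hpos : ∀ i, 0 ≤ p t i) (hmom : ∑ i, p t i = 1)
    (j : Fin N) :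
    |(1 / (2 * α)) * ∑ i, p t i * Real.exp (-|x t j - x t i| / α)| ≤ 1 / (2 * α) := by
  have hsum : |∑ i, p t i * Real.exp (-|x t j - x t i| / α)| ≤ 1 := by
    simp_rw [mul_comm (p t _)]
    calc _ ≤ ∑ i, |p t i| := Finset.abs_sum_mul_le_sum_abs _ fun i _ => by
            rw [abs_of_pos (Real.exp_pos _)]; exact Real.exp_neg_abs_div_le_one hα.le _
      _ = 1 := by simp_rw [abs_of_nonneg (hpos _)]; exact hmom
  rw [abs_mul, abs_of_pos (by positivity)]
  exact mul_le_of_le_one_right (by positivity) hsum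

lemma peakon_force_abs_le (hα : 0 < α) (hpos : ∀ i, 0 ≤ p t i) (hmom : ∑ i, p t i = 1)
    (j : Fin N) :
    |(1 / (2 * α ^ 2)) * p t j * ∑ i ∈ Finset.univ.erase j,
        p t i * Real.sign (x t j - x t i) * Real.exp (-|x t j - x t i| / α)|
      ≤ 1 / (2 * α ^ 2) * p t j := by
  have hweight : ∀ i ∈ Finset.univ.erase j,
      |Real.sign (x t j - x t i) * Real.exp (-|x t j - x t i| / α)| ≤ 1 := fun i _ => by
    rw [abs_mul, abs_of_pos (Real.exp_pos _)]
    exact mul_le_one₀ (Real.abs_sign_le_one_s18 _) (Real.exp_pos _).le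
      (Real.exp_neg_abs_div_le_one hα.le _)
  have hsum : |∑ i ∈ Finset.univ.erase j,
      p t i * Real.sign (x t j - x t i) * Real.exp (-|x t j - x t i| / α)| ≤ 1 := by
    simp_rw [mul_assoc, mul_comm (p t _)]
    calc _ ≤ ∑ i ∈ Finset.univ.erase j, |p t i| := Finset.abs_sum_mul_le_sum_abs _ hweight
      _ ≤ ∑ i, |p t i| := Finset.sum_le_sum_of_subset_of_nonneg (Finset.erase_subset _ _)
          fun i _ _ => abs_nonneg _
      _ = 1 := by simp_rw [abs_of_nonneg (hpos _)]; exact hmom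
  rw [abs_mul, abs_of_nonneg (by have := hpos j; positivity)]
  exact mul_le_of_le_one_right (by have := hpos j; positivity) hsum

end Peakon

/-- for nonnegative peakon solutions of total momentum `1`, the positions
are `1/(2α)`-Lipschitz in time and the momenta are summably `1/(2α²)`-Lipschitz in time. -/
theorem statement18 (α : ℝ) (hα : 0 < α) (N : ℕ) (x p : ℝ → Fin N → ℝ)
    (hode : PeakonSystem α N x p)
    (hpos : ∀ j : Fin N, ∀ t : ℝ, 0 ≤ t → 0 ≤ p t j)
    (hmom : ∀ t : ℝ, 0 ≤ t → ∑ j, p t j = 1) :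
    ∀ s t : ℝ, 0 ≤ s → 0 ≤ t →
      (∀ j : Fin N, |x s j - x t j| ≤ (1 / (2 * α)) * |s - t|) ∧
      ∑ j, |p s j - p t j| ≤ (1 / (2 * α ^ 2)) * |s - t| := by
  intro s t hs ht
  have hpos' : ∀ τ ∈ Set.Ici (0 : ℝ), ∀ i, 0 ≤ p τ i := fun τ hτ i => hpos i τ hτ
  refine ⟨fun j => ?_, ?_⟩
  · simpa only [Real.norm_eq_abs] using (convex_Ici (0 : ℝ)).norm_image_sub_le_of_norm_hasDerivWithin_le
      (fun τ hτ => (hode j τ hτ).1)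
      (fun τ hτ => peakon_velocity_abs_le hα (hpos' τ hτ) (hmom τ hτ) j) ht hs
  · refine (convex_Ici (0 : ℝ)).sum_abs_sub_le_of_hasDerivWithinAt
      (fun j τ hτ => (hode j τ hτ).2) (fun τ hτ => ?_) hs ht
    calc _ ≤ ∑ j, 1 / (2 * α ^ 2) * p τ j :=
          Finset.sum_le_sum fun j _ => peakon_force_abs_le hα (hpos' τ hτ) (hmom τ hτ) j
      _ = 1 / (2 * α ^ 2) := by rw [← Finset.mul_sum, hmom τ hτ, mul_one]
end
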